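/- arXiv:2404.00926 — 5 statements merged into one kernel-verified Lean document; each statement's English description precedes it below -/
import Mathlib

section
/- Let (𝒜, μ) and (ℬ, ν) be weighted unital complex *-algebras, let C > 0, and let α : (𝒜, μ) → (ℬ, ν) be a C-homomorphism. Then for every tracial state τ on ℬ, the pullback τ ∘ α is a tracial state on 𝒜 and df(τ ∘ α; μ) ≤ C · df(τ; ν). -/
open scoped Classical
noncomputable section

/-! ### Star algebra basics -/

def IsHermSqSum {A : Type} [Ring A] [StarRing A] (a : A) : Prop :=
  a ∈ AddSubmonoid.closure {x : A | ∃ c : A, x = star c * c}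

def IsCommutatorSum {A : Type} [Ring A] (a : A) : Prop :=
  a ∈ AddSubgroup.closure {x : A | ∃ f g : A, x = f * g - g * f}

/-- `a ≳ b` : `a - b` is cyclically equivalent to a sum of hermitian squares. -/
def CycGe {A : Type} [Ring A] [StarRing A] (a b : A) : Prop :=
  ∃ s : A, IsHermSqSum s ∧ IsCommutatorSum (a - b - s)

structure IsTracialState {A : Type} [Ring A] [Algebra ℂ A] [StarRing A]
    (τ : A →ₗ[ℂ] ℂ) : Prop where
  map_one : τ 1 = 1
  sq_re_nonneg : ∀ a : A, 0 ≤ (τ (star a * a)).re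
  sq_im_zero : ∀ a : A, (τ (star a * a)).im = 0
  map_star : ∀ a : A, τ (star a) = starRingEnd ℂ (τ a)
  map_mul_comm : ∀ a b : A, τ (a * b) = τ (b * a)

structure Weighting (A : Type) [Ring A] [Algebra ℂ A] [StarRing A] where
  idx : Type
  [fin : Fintype idx]
  elem : idx → A
  w : idx → ℝ
  w_nonneg : ∀ i, 0 ≤ w i

attribute [instance] Weighting.fin

def Weighting.total {A : Type} [Ring A] [Algebra ℂ A] [StarRing A] (μ : Weighting A) : A :=
  ∑ i : μ.idx, (μ.w i : ℂ) • (star (μ.elem i) * μ.elem i)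

def Weighting.add {A : Type} [Ring A] [Algebra ℂ A] [StarRing A]
    (μ ν : Weighting A) : Weighting A where
  idx := μ.idx ⊕ ν.idx
  elem := Sum.elim μ.elem ν.elem
  w := Sum.elim μ.w ν.w
  w_nonneg := by rintro (i | i); exacts [μ.w_nonneg i, ν.w_nonneg i]

/-- defect `df(τ; μ) = ∑ₐ μ(a) ‖a‖τ²`. -/
def wdf {A : Type} [Ring A] [Algebra ℂ A] [StarRing A]
    (τ : A →ₗ[ℂ] ℂ) (μ : Weighting A) : ℝ :=
  ∑ i : μ.idx, μ.w i * (τ (star (μ.elem i) * μ.elem i)).re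

def IsCHom {A B : Type} [Ring A] [Algebra ℂ A] [StarRing A]
    [Ring B] [Algebra ℂ B] [StarRing B]
    (C : ℝ) (μ : Weighting A) (ν : Weighting B) (α : A →⋆ₐ[ℂ] B) : Prop :=
  CycGe ((C : ℂ) • ν.total) (α μ.total)

def IsFinDimState {A : Type} [Ring A] [Algebra ℂ A] [StarRing A] (τ : A →ₗ[ℂ] ℂ) : Prop :=
  ∃ (H : Type) (_ : NormedAddCommGroup H) (_ : InnerProductSpace ℂ H)
    (_ : FiniteDimensional ℂ H) (ρ : A →⋆ₐ[ℂ] (H →L[ℂ] H)) (v : H),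
      ‖v‖ = 1 ∧ ∀ a : A, τ a = inner ℂ v (ρ a v)

/-! ### Star structure on suitable `RingQuot`s -/

private def ringQuotStarAux {R : Type} [Semiring R] [StarRing R] (r : R → R → Prop) :
    R →+* (RingQuot r)ᵐᵒᵖ where
  toFun x := MulOpposite.op (RingQuot.mkRingHom r (star x))
  map_one' := by simp
  map_mul' a b := by
    simp [star_mul, map_mul]
  map_zero' := by simp
  map_add' a b := by
    simp [star_add, map_add, add_comm]

def ringQuotStarRing {R : Type} [Semiring R] [StarRing R] (r : R → R → Prop)
    (hr : ∀ a b, r a b → r (star a) (star b)) : StarRing (RingQuot r) :=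
  have cond : ∀ ⦃x y : R⦄, r x y → ringQuotStarAux r x = ringQuotStarAux r y := fun x y h =>
    congrArg MulOpposite.op (RingQuot.mkRingHom_rel (hr x y h))
  let F : RingQuot r →+* (RingQuot r)ᵐᵒᵖ := RingQuot.lift ⟨ringQuotStarAux r, cond⟩
  have hmk : ∀ y : R,
      F (RingQuot.mkRingHom r y) = MulOpposite.op (RingQuot.mkRingHom r (star y)) :=
    fun y => RingQuot.lift_mkRingHom_apply (ringQuotStarAux r) cond y
  { star := fun x => (F x).unop
    star_involutive := by
      intro x
      obtain ⟨y, rfl⟩ := RingQuot.mkRingHom_surjective r x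
      simp [hmk]
    star_mul := fun a b => by simp [map_mul]
    star_add := fun a b => by simp [map_add] }

/-! ### Boolean constraint systems and their algebras -/

/-- A boolean constraint system over a finite (linearly ordered) set of variables `X`,
with constraints indexed by a finite type `ι`.  Assignments take values in
`ℤˣ = {±1}`. -/
structure BCS (X : Type) [Fintype X] [LinearOrder X] (ι : Type) [Fintype ι] where
  V : ι → Finset X
  hV : ∀ i, (V i).Nonempty
  C : ∀ i, Set ({x // x ∈ V i} → ℤˣ)
  hC : ∀ i, (C i).Nonempty

namespace BCS

variable {X : Type} [Fintype X] [LinearOrder X] {ι : Type} [Fintype ι]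

/-- Assignments to the variables of the `i`-th context. -/
abbrev Asn (B : BCS X ι) (i : ι) : Type := {x // x ∈ B.V i} → ℤˣ

/-- Generators of the algebras: a context together with one of its variables. -/
abbrev GenIdx (B : BCS X ι) : Type := Σ i : ι, {x // x ∈ B.V i}

/-- The ambient free `*`-algebra on the generators. -/
abbrev FreeA (B : BCS X ι) : Type := FreeAlgebra ℂ B.GenIdx

/-- The (ordered) product `∏_{x ∈ S} (1 + φ(x)·x)/2` in the free algebra, for a
subset `S` of the `i`-th context, taken in the order inherited from `X`. -/
def phiFreeOn (B : BCS X ι) (i : ι) (S : Finset X) (hS : S ⊆ B.V i)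
    (φ : {x // x ∈ S} → ℤˣ) : B.FreeA :=
  ((S.sort (· ≤ ·)).pmap
    (fun x hx => (2⁻¹ : ℂ) • (1 + ((φ ⟨x, hx⟩ : ℤ) : ℂ) •
        FreeAlgebra.ι ℂ (⟨i, ⟨x, hS hx⟩⟩ : B.GenIdx)))
    (fun x hx => (Finset.mem_sort _).mp hx)).prod

/-- `Φ_{V_i,φ}` in the free algebra. -/
def phiFree (B : BCS X ι) (i : ι) (φ : B.Asn i) : B.FreeA :=
  B.phiFreeOn i (B.V i) (subset_refl _) φ

/-- Defining relations of the BCS algebra `𝒜(B)`: the generators are self-adjoint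
involutions, generators within one context commute, and `Φ_{V_i,φ} = 0` for
unsatisfying assignments `φ ∉ C_i`. -/
inductive Rel (B : BCS X ι) : B.FreeA → B.FreeA → Prop
  | sq (g : B.GenIdx) : Rel B (FreeAlgebra.ι ℂ g * FreeAlgebra.ι ℂ g) 1
  | comm (i : ι) (x y : {x // x ∈ B.V i}) :
      Rel B (FreeAlgebra.ι ℂ (⟨i, x⟩ : B.GenIdx) * FreeAlgebra.ι ℂ (⟨i, y⟩ : B.GenIdx))
        (FreeAlgebra.ι ℂ (⟨i, y⟩ : B.GenIdx) * FreeAlgebra.ι ℂ (⟨i, x⟩ : B.GenIdx))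
  | unsat (i : ι) (φ : B.Asn i) (h : φ ∉ B.C i) : Rel B (B.phiFree i φ) 0
  | unsat_star (i : ι) (φ : B.Asn i) (h : φ ∉ B.C i) : Rel B (star (B.phiFree i φ)) 0

/-- The BCS algebra `𝒜(B) = *ᵢ 𝒜(V_i, C_i)`, presented by generators and relations. -/
def Alg (B : BCS X ι) : Type := RingQuot B.Rel

instance (B : BCS X ι) : Ring B.Alg := inferInstanceAs (Ring (RingQuot B.Rel))
instance (B : BCS X ι) : Algebra ℂ B.Alg := inferInstanceAs (Algebra ℂ (RingQuot B.Rel))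

instance (B : BCS X ι) : StarRing B.Alg :=
  ringQuotStarRing B.Rel (by
    intro a b h
    induction h with
    | sq g => simpa [star_mul] using Rel.sq g
    | comm i x y => simpa [star_mul] using Rel.comm i y x
    | unsat i φ h => simpa using Rel.unsat_star i φ h
    | unsat_star i φ h => simpa using Rel.unsat i φ h)

/-- The canonical quotient map onto `𝒜(B)`. -/
def toAlg (B : BCS X ι) : B.FreeA →ₐ[ℂ] B.Alg := RingQuot.mkAlgHom ℂ B.Rel

/-- The generator `σ_i(x)` of `𝒜(B)`. -/
def gen (B : BCS X ι) (i : ι) (x : {x // x ∈ B.V i}) : B.Alg :=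
  B.toAlg (FreeAlgebra.ι ℂ (⟨i, x⟩ : B.GenIdx))

/-- `Φ_{S,φ}` in `𝒜(B)` for a subset `S ⊆ V_i`. -/
def phiOn (B : BCS X ι) (i : ι) (S : Finset X) (hS : S ⊆ B.V i)
    (φ : {x // x ∈ S} → ℤˣ) : B.Alg :=
  B.toAlg (B.phiFreeOn i S hS φ)

/-- `Φ_{V_i,φ}` in `𝒜(B)`. -/
def phi (B : BCS X ι) (i : ι) (φ : B.Asn i) : B.Alg := B.toAlg (B.phiFree i φ)

/-- Two assignments (to possibly different contexts) disagree on the intersection of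
their contexts. -/
def Disagree (B : BCS X ι) {i j : ι} (φ : B.Asn i) (ψ : B.Asn j) : Prop :=
  ∃ (x : X) (hi : x ∈ B.V i) (hj : x ∈ B.V j), φ ⟨x, hi⟩ ≠ ψ ⟨x, hj⟩

end BCS

/-- `π` is a probability distribution. -/
def IsProbDist {ι : Type} [Fintype ι] (π : ι × ι → ℝ) : Prop :=
  (∀ p, 0 ≤ π p) ∧ ∑ p : ι × ι, π p = 1

/-- `π` is maximized on the diagonal. -/
def MaxOnDiag {ι : Type} [Fintype ι] (π : ι × ι → ℝ) : Prop :=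
  ∀ i j, π (i, j) ≤ π (i, i) ∧ π (j, i) ≤ π (i, i)

namespace BCS

variable {X : Type} [Fintype X] [LinearOrder X] {ι : Type} [Fintype ι]

/-- The weighting `μ_π` on `𝒜(B)`: weight `π(i,j)` on `Φ_{V_i,φ}Φ_{V_j,ψ}` for
satisfying assignments that disagree on `V_i ∩ V_j`. -/
def muPi (B : BCS X ι) (π : ι × ι → ℝ) (hπ : ∀ p, 0 ≤ π p) : Weighting B.Alg where
  idx := Σ i : ι, Σ j : ι, B.Asn i × B.Asn j
  elem := fun p => B.phi p.1 p.2.2.1 * B.phi p.2.1 p.2.2.2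
  w := fun p =>
    if p.2.2.1 ∈ B.C p.1 ∧ p.2.2.2 ∈ B.C p.2.1 ∧ B.Disagree p.2.2.1 p.2.2.2
      then π (p.1, p.2.1) else 0
  w_nonneg := fun p => by
    try dsimp only
    split
    · exact hπ _
    · exact le_rfl

/-- The weighting `μ_inter` on `𝒜(B)`: weight `π(i,j)` on `σ_i(x) - σ_j(x)` for
`i ≠ j` and `x ∈ V_i ∩ V_j`. -/
def muInter (B : BCS X ι) (π : ι × ι → ℝ) (hπ : ∀ p, 0 ≤ π p) : Weighting B.Alg where
  idx := ι × ι × X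
  elem := fun p =>
    if h : p.2.2 ∈ B.V p.1 ∧ p.2.2 ∈ B.V p.2.1
      then B.gen p.1 ⟨p.2.2, h.1⟩ - B.gen p.2.1 ⟨p.2.2, h.2⟩ else 0
  w := fun p =>
    if p.1 ≠ p.2.1 ∧ p.2.2 ∈ B.V p.1 ∧ p.2.2 ∈ B.V p.2.1 then π (p.1, p.2.1) else 0
  w_nonneg := fun p => by
    try dsimp only
    split
    · exact hπ _
    · exact le_rfl

end BCS

namespace BCS

variable {X Y : Type} [Fintype X] [LinearOrder X] [Fintype Y] [LinearOrder Y]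
  {ι : Type} [Fintype ι]

/-- A classical homomorphism `𝒜(B) → 𝒜(B')`: it is induced, context by context, by
functions `f_i : D_i → C_i` which reflect disagreement on intersections of contexts. -/
def IsClassicalHom (B : BCS X ι) (B' : BCS Y ι) (σ : B.Alg →⋆ₐ[ℂ] B'.Alg) : Prop :=
  ∃ f : ∀ i : ι, B'.Asn i → B.Asn i,
    (∀ (i : ι) (ψ : B'.Asn i), ψ ∈ B'.C i → f i ψ ∈ B.C i) ∧
    (∀ (i : ι) (φ : B.Asn i), φ ∈ B.C i →
      σ (B.phi i φ) = ∑ ψ : B'.Asn i,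
        if ψ ∈ B'.C i ∧ f i ψ = φ then B'.phi i ψ else 0) ∧
    (∀ (i j : ι) (φ : B'.Asn i) (ψ : B'.Asn j), φ ∈ B'.C i → ψ ∈ B'.C j →
      B.Disagree (f i φ) (f j ψ) → B'.Disagree φ ψ)

end BCS

/-- `B'` is a subdivision of `B`, with `mi i` clauses subdividing the `i`-th
constraint of `B`. -/
structure IsSubdivision {X : Type} [Fintype X] [LinearOrder X] {ι : Type} [Fintype ι]
    (B : BCS X ι) (mi : ι → ℕ) (B' : BCS X (Σ i : ι, Fin (mi i))) : Prop where
  sub : ∀ p : Σ i : ι, Fin (mi i), B'.V p ⊆ B.V p.1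
  cover : ∀ (i : ι) (x y : X), x ∈ B.V i → y ∈ B.V i →
    ∃ j : Fin (mi i), x ∈ B'.V ⟨i, j⟩ ∧ y ∈ B'.V ⟨i, j⟩
  constr : ∀ (i : ι) (φ : B.Asn i), φ ∈ B.C i ↔
    ∀ j : Fin (mi i),
      (fun z : {x // x ∈ B'.V ⟨i, j⟩} => φ ⟨z.1, sub ⟨i, j⟩ z.2⟩) ∈ B'.C ⟨i, j⟩

/-- The probability distribution induced on clause pairs by a subdivision. -/
def piSub {ι : Type} (π : ι × ι → ℝ) (mi : ι → ℕ) :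
    (Σ i : ι, Fin (mi i)) × (Σ i : ι, Fin (mi i)) → ℝ :=
  fun p => π (p.1.1, p.2.1) / ((mi p.1.1 : ℝ) * (mi p.2.1 : ℝ))

theorem piSub_nonneg {ι : Type} {π : ι × ι → ℝ} (mi : ι → ℕ) (hπ : ∀ p, 0 ≤ π p) :
    ∀ p, 0 ≤ piSub π mi p := by
  intro p
  exact div_nonneg (hπ _) (by positivity)

namespace BCS

variable {X : Type} [Fintype X] [LinearOrder X] {ι : Type} [Fintype ι]

/-- The BCS obtained by removing all constraints; its algebra is the free product
`*ᵢ ℂZ₂^{V_i}` of the context algebras. -/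
def full (B : BCS X ι) : BCS X ι where
  V := B.V
  hV := B.hV
  C := fun _ => Set.univ
  hC := fun _ => ⟨fun _ => 1, Set.mem_univ _⟩

/-- The weighting `μ_sat` on `*ᵢ ℂZ₂^{V_i}`: weight `π(i,i)` on `Φ_{V_i,φ}` for
every unsatisfying assignment `φ ∉ C_i`. -/
def muSat (B : BCS X ι) (π : ι × ι → ℝ) (hπ : ∀ p, 0 ≤ π p) : Weighting (B.full).Alg where
  idx := Σ i : ι, B.Asn i
  elem := fun p => (B.full).phi p.1 p.2
  w := fun p => if p.2 ∈ B.C p.1 then 0 else π (p.1, p.1)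
  w_nonneg := fun p => by
    try dsimp only
    split
    · exact le_rfl
    · exact hπ _

/-- The weighting `μ_clause` on `*ᵢ ℂZ₂^{V_i}` associated with a subdivision:
weight `π(i,i)/m_i²` on `Φ_{V_{ij},φ}` for every `φ ∉ D_{ij}`. -/
def muClause (B : BCS X ι) (mi : ι → ℕ) (B' : BCS X (Σ i : ι, Fin (mi i)))
    (hsub : ∀ p : Σ i : ι, Fin (mi i), B'.V p ⊆ B.V p.1)
    (π : ι × ι → ℝ) (hπ : ∀ p, 0 ≤ π p) : Weighting (B.full).Alg where
  idx := Σ p : Σ i : ι, Fin (mi i), B'.Asn p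
  elem := fun q => (B.full).phiOn q.1.1 (B'.V q.1) (hsub q.1) q.2
  w := fun q => if q.2 ∈ B'.C q.1 then 0 else π (q.1.1, q.1.1) / (mi q.1.1 : ℝ) ^ 2
  w_nonneg := fun q => by
    try dsimp only
    split
    · exact le_rfl
    · exact div_nonneg (hπ _) (by positivity)

/-- The connectivity of a BCS. -/
def connectivity (B : BCS X ι) : ℕ :=
  Finset.univ.sup fun i : ι =>
    ∑ x ∈ B.V i, (Finset.univ.filter fun j : ι => x ∈ B.V j).card

end BCS

namespace BCS

variable {X : Type} [Fintype X] [LinearOrder X] {ι : Type} [Fintype ι]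

/-- Defining relations of `𝒜_free(B) = *ᵢ ℂZ₂^{*V_i}`: the generators are
self-adjoint involutions (no commutation, no constraints). -/
inductive FRel (B : BCS X ι) : B.FreeA → B.FreeA → Prop
  | sq (g : B.GenIdx) : FRel B (FreeAlgebra.ι ℂ g * FreeAlgebra.ι ℂ g) 1

/-- The algebra `𝒜_free(B) = *ᵢ ℂZ₂^{*V_i}`. -/
def FAlg (B : BCS X ι) : Type := RingQuot B.FRel

instance (B : BCS X ι) : Ring B.FAlg := inferInstanceAs (Ring (RingQuot B.FRel))
instance (B : BCS X ι) : Algebra ℂ B.FAlg := inferInstanceAs (Algebra ℂ (RingQuot B.FRel))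

instance (B : BCS X ι) : StarRing B.FAlg :=
  ringQuotStarRing B.FRel (by
    intro a b h
    induction h with
    | sq g => simpa [star_mul] using FRel.sq g)

def toFAlg (B : BCS X ι) : B.FreeA →ₐ[ℂ] B.FAlg := RingQuot.mkAlgHom ℂ B.FRel

/-- The generator `σ_i(x)` of `𝒜_free(B)`. -/
def fgen (B : BCS X ι) (i : ι) (x : {x // x ∈ B.V i}) : B.FAlg :=
  B.toFAlg (FreeAlgebra.ι ℂ (⟨i, x⟩ : B.GenIdx))

/-- `Φ_{S,φ}` in `𝒜_free(B)` for a subset `S ⊆ V_i` (ordered product). -/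
def fphiOn (B : BCS X ι) (i : ι) (S : Finset X) (hS : S ⊆ B.V i)
    (φ : {x // x ∈ S} → ℤˣ) : B.FAlg :=
  B.toFAlg (B.phiFreeOn i S hS φ)

/-- The weighting `μ_inter` on `𝒜_free(B)`. -/
def fmuInter (B : BCS X ι) (π : ι × ι → ℝ) (hπ : ∀ p, 0 ≤ π p) : Weighting B.FAlg where
  idx := ι × ι × X
  elem := fun p =>
    if h : p.2.2 ∈ B.V p.1 ∧ p.2.2 ∈ B.V p.2.1
      then B.fgen p.1 ⟨p.2.2, h.1⟩ - B.fgen p.2.1 ⟨p.2.2, h.2⟩ else 0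
  w := fun p =>
    if p.1 ≠ p.2.1 ∧ p.2.2 ∈ B.V p.1 ∧ p.2.2 ∈ B.V p.2.1 then π (p.1, p.2.1) else 0
  w_nonneg := fun p => by
    try dsimp only
    split
    · exact hπ _
    · exact le_rfl

/-- The weighting `μ_clause` on `𝒜_free(B)` associated with a subdivision. -/
def fmuClause (B : BCS X ι) (mi : ι → ℕ) (B' : BCS X (Σ i : ι, Fin (mi i)))
    (hsub : ∀ p : Σ i : ι, Fin (mi i), B'.V p ⊆ B.V p.1)
    (π : ι × ι → ℝ) (hπ : ∀ p, 0 ≤ π p) : Weighting B.FAlg where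
  idx := Σ p : Σ i : ι, Fin (mi i), B'.Asn p
  elem := fun q => B.fphiOn q.1.1 (B'.V q.1) (hsub q.1) q.2
  w := fun q => if q.2 ∈ B'.C q.1 then 0 else π (q.1.1, q.1.1) / (mi q.1.1 : ℝ) ^ 2
  w_nonneg := fun q => by
    try dsimp only
    split
    · exact le_rfl
    · exact div_nonneg (hπ _) (by positivity)

/-- The weighting `μ_comm` on `𝒜_free(B)`: weight `π(i,i)` on the commutators
`[σ_i(x), σ_i(y)]` for `x, y ∈ V_i`. -/
def fmuComm (B : BCS X ι) (π : ι × ι → ℝ) (hπ : ∀ p, 0 ≤ π p) : Weighting B.FAlg where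
  idx := Σ i : ι, {x // x ∈ B.V i} × {x // x ∈ B.V i}
  elem := fun q => B.fgen q.1 q.2.1 * B.fgen q.1 q.2.2 - B.fgen q.1 q.2.2 * B.fgen q.1 q.2.1
  w := fun q => π (q.1, q.1)
  w_nonneg := fun q => hπ _

/-- Defining relations of the synchronous algebra of the game `𝒢(B,π)`. -/
inductive SynRel (B : BCS X ι) (π : ι × ι → ℝ) : B.Alg → B.Alg → Prop
  | zero {i j : ι} (φ : B.Asn i) (ψ : B.Asn j) (hπ : 0 < π (i, j)) (h : B.Disagree φ ψ) :
      SynRel B π (B.phi i φ * B.phi j ψ) 0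
  | zero_star {i j : ι} (φ : B.Asn i) (ψ : B.Asn j) (hπ : 0 < π (i, j)) (h : B.Disagree φ ψ) :
      SynRel B π (star (B.phi i φ * B.phi j ψ)) 0

/-- The synchronous algebra `SynAlg(B,π)`. -/
def SynAlg (B : BCS X ι) (π : ι × ι → ℝ) : Type := RingQuot (B.SynRel π)

instance (B : BCS X ι) (π : ι × ι → ℝ) : Ring (B.SynAlg π) :=
  inferInstanceAs (Ring (RingQuot (B.SynRel π)))
instance (B : BCS X ι) (π : ι × ι → ℝ) : Algebra ℂ (B.SynAlg π) :=
  inferInstanceAs (Algebra ℂ (RingQuot (B.SynRel π)))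

instance (B : BCS X ι) (π : ι × ι → ℝ) : StarRing (B.SynAlg π) :=
  ringQuotStarRing (B.SynRel π) (by
    intro a b h
    induction h with
    | zero φ ψ hπ h => simpa using SynRel.zero_star φ ψ hπ h
    | zero_star φ ψ hπ h => simpa using SynRel.zero φ ψ hπ h)

/-- The quotient map `𝒜(B) → SynAlg(B,π)`. -/
def synMk (B : BCS X ι) (π : ι × ι → ℝ) : B.Alg →ₐ[ℂ] B.SynAlg π :=
  RingQuot.mkAlgHom ℂ (B.SynRel π)

/-- The BCS consisting of the single `i`-th constraint of `B`; its algebra is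
`𝒜(V_i, C_i)`. -/
def single (B : BCS X ι) (i : ι) : BCS X Unit where
  V := fun _ => B.V i
  hV := fun _ => B.hV i
  C := fun _ => B.C i
  hC := fun _ => B.hC i

end BCS

namespace BCS

variable {X : Type} [Fintype X] [LinearOrder X] {ι : Type} [Fintype ι]

/-- The degree-`n` obliviation of `B`: variables `Z = X × [n]`, contexts
`U_i = V_i × [n]`, and `φ ∈ E_i` iff the products `x ↦ φ(x,1)⋯φ(x,n)` satisfy `C_i`. -/
def obl (B : BCS X ι) (n : ℕ) (hn : 0 < n) [LinearOrder (X × Fin n)] :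
    BCS (X × Fin n) ι where
  V := fun i => (B.V i) ×ˢ (Finset.univ : Finset (Fin n))
  hV := fun i => by
    obtain ⟨x, hx⟩ := B.hV i
    exact ⟨(x, ⟨0, hn⟩), Finset.mem_product.mpr ⟨hx, Finset.mem_univ _⟩⟩
  C := fun i =>
    {φ | (fun x : {x // x ∈ B.V i} =>
      ∏ k : Fin n, φ ⟨(x.1, k), Finset.mem_product.mpr ⟨x.2, Finset.mem_univ _⟩⟩) ∈ B.C i}
  hC := fun i => by
    obtain ⟨ψ, hψ⟩ := B.hC i
    refine ⟨fun z => if z.1.2 = (⟨0, hn⟩ : Fin n)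
      then ψ ⟨z.1.1, (Finset.mem_product.mp z.2).1⟩ else 1, ?_⟩
    have : (fun x : {x // x ∈ B.V i} =>
        ∏ k : Fin n, (fun z : {z // z ∈ (B.V i) ×ˢ (Finset.univ : Finset (Fin n))} =>
          if z.1.2 = (⟨0, hn⟩ : Fin n) then ψ ⟨z.1.1, (Finset.mem_product.mp z.2).1⟩ else 1)
          ⟨(x.1, k), Finset.mem_product.mpr ⟨x.2, Finset.mem_univ _⟩⟩) = ψ := by
      funext x
      rw [Finset.prod_eq_single (⟨0, hn⟩ : Fin n)]
      · simp
      · intro k _ hk; simp [hk]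
      · intro h; exact absurd (Finset.mem_univ _) h
    simp only [Set.mem_setOf_eq, this]
    exact hψ

theorem mem_obl_V {B : BCS X ι} {n : ℕ} {hn : 0 < n} [LinearOrder (X × Fin n)]
    {i : ι} {x : X} (hx : x ∈ B.V i) (k : Fin n) : (x, k) ∈ (B.obl n hn).V i :=
  Finset.mem_product.mpr ⟨hx, Finset.mem_univ _⟩

end BCS

/-! ### Width-5 permutation branching programs and randomizing tableaux -/

/-- A width-5 permutation branching program on variables `V`. -/
structure PBP (V : Type) where
  d : ℕ
  var : Fin d → V
  perm : Fin d → ℤˣ → Equiv.Perm (Fin 5)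
  sigma : Equiv.Perm (Fin 5)
  sigma_isCycle : sigma.IsCycle
  sigma_card : sigma.support.card = 5

namespace PBP

variable {V : Type}

/-- The permutation computed by the program on an assignment. -/
def eval (P : PBP V) (φ : V → ℤˣ) : Equiv.Perm (Fin 5) :=
  ((List.finRange P.d).map fun q => P.perm q (φ (P.var q))).prod

/-- The program recognizes the constraint `C`. -/
def Recognizes (P : PBP V) (C : Set (V → ℤˣ)) : Prop :=
  (∀ φ ∈ C, P.eval φ = P.sigma) ∧ ∀ φ ∉ C, P.eval φ = 1

end PBP

/-- The extension of the randomizers `r : [3] × [d-1] → S₅` by the convention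
`r(p,0) = r(p,d) = e`; here `t` is the 1-based column index. -/
def rExt {d : ℕ} (r : Fin 3 → Fin (d - 1) → Equiv.Perm (Fin 5)) (p : Fin 3) (t : ℕ) :
    Equiv.Perm (Fin 5) :=
  if h : 1 ≤ t ∧ t ≤ d - 1 then r p ⟨t - 1, by omega⟩ else 1

/-- `(φ, T, r)` is a (four-row) randomizing tableau for the program `P`. -/
structure IsTableau {V : Type} (P : PBP V) (φ : V → ℤˣ)
    (T : Fin 4 → Fin P.d → Equiv.Perm (Fin 5))
    (r : Fin 3 → Fin (P.d - 1) → Equiv.Perm (Fin 5)) : Prop where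
  row_one : ∀ q : Fin P.d, T 0 q = P.perm q (φ (P.var q))
  row_succ : ∀ (p : Fin 3) (q : Fin P.d),
    T p.succ q = (rExt r p q.val)⁻¹ * T p.castSucc q * rExt r p (q.val + 1)
  row_four_prod : ((List.finRange P.d).map fun q => T 3 q).prod = P.sigma



lemma tau_commutatorSum {B : Type} [Ring B] [Algebra ℂ B] [StarRing B]
    (τ : B →ₗ[ℂ] ℂ) (hτ : IsTracialState τ) {c : B} (hc : IsCommutatorSum c) :
    τ c = 0 := by
  refine AddSubgroup.closure_induction ?_ ?_ ?_ ?_ hc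
  · rintro x ⟨f, g, rfl⟩
    simp [map_sub, hτ.map_mul_comm f g]
  · simp
  · intro x y _ _ hx hy; simp [map_add, hx, hy]
  · intro x _ hx; simp [map_neg, hx]

lemma tau_hermSqSum {B : Type} [Ring B] [Algebra ℂ B] [StarRing B]
    (τ : B →ₗ[ℂ] ℂ) (hτ : IsTracialState τ) {s : B} (hs : IsHermSqSum s) :
    0 ≤ (τ s).re ∧ (τ s).im = 0 := by
  refine AddSubmonoid.closure_induction ?_ ?_ ?_ hs
  · rintro x ⟨c, rfl⟩
    exact ⟨hτ.sq_re_nonneg c, hτ.sq_im_zero c⟩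
  · simp
  · intro x y _ _ hx hy
    rw [map_add]
    exact ⟨by simpa using add_nonneg hx.1 hy.1, by simp [hx.2, hy.2]⟩

lemma re_tau_total {B : Type} [Ring B] [Algebra ℂ B] [StarRing B]
    (τ : B →ₗ[ℂ] ℂ) (ν : Weighting B) : (τ ν.total).re = wdf τ ν := by
  rw [Weighting.total, map_sum, Complex.re_sum, wdf]
  refine Finset.sum_congr rfl fun i _ => ?_
  rw [map_smul]
  simp [Complex.mul_re]

/-- Pulling back a tracial state along a `C`-homomorphism of weighted
`*`-algebras yields a tracial state whose defect grows by at most a factor of `C`. -/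
theorem pullback_tracialState_of_isCHom
    {A B : Type} [Ring A] [Algebra ℂ A] [StarRing A] [Ring B] [Algebra ℂ B] [StarRing B]
    (μ : Weighting A) (ν : Weighting B) (C : ℝ) (hC : 0 < C)
    (α : A →⋆ₐ[ℂ] B) (hα : IsCHom C μ ν α)
    (τ : B →ₗ[ℂ] ℂ) (hτ : IsTracialState τ) :
    IsTracialState (τ.comp α.toAlgHom.toLinearMap) ∧
      wdf (τ.comp α.toAlgHom.toLinearMap) μ ≤ C * wdf τ ν := by
  have hstate : IsTracialState (τ.comp α.toAlgHom.toLinearMap) := by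
    constructor
    · simp [hτ.map_one]
    · intro a; simpa [map_mul, map_star] using hτ.sq_re_nonneg (α a)
    · intro a; simpa [map_mul, map_star] using hτ.sq_im_zero (α a)
    · intro a; simpa [map_star] using hτ.map_star (α a)
    · intro a b; simpa [map_mul] using hτ.map_mul_comm (α a) (α b)
  refine ⟨hstate, ?_⟩
  obtain ⟨s, hs, hcomm⟩ := hα
  have h0 : τ ((C : ℂ) • ν.total - α μ.total - s) = 0 := tau_commutatorSum τ hτ hcomm
  have hre : (τ ((C : ℂ) • ν.total)).re - (τ (α μ.total)).re - (τ s).re = 0 := by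
    have := congrArg Complex.re h0
    simpa [map_sub, Complex.sub_re] using this
  have hsre : 0 ≤ (τ s).re := (tau_hermSqSum τ hτ hs).1
  have h1 : (τ ((C : ℂ) • ν.total)).re = C * wdf τ ν := by
    rw [map_smul, smul_eq_mul, Complex.mul_re, re_tau_total τ ν]
    simp
  have h2 : (τ (α μ.total)).re = wdf (τ.comp α.toAlgHom.toLinearMap) μ := by
    rw [← re_tau_total (τ.comp α.toAlgHom.toLinearMap) μ]
    simp
  linarith
end
end

section
/- Let B = (X, {(V_i, C_i)}_{i=1}^m) be a BCS and let B' = Obl_n(B) = (Z, {(U_i, E_i)}_{i=1}^m) be its degree-n obliviation. Then there is a well-defined unital *-homomorphism α : 𝒜(B) → 𝒜(B') with α(σ_i(x)) = σ_i(x(1)·x(2)⋯x(n)) for all i ∈ [m] and x ∈ V_i, and α is a classical homomorphism. -/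
open scoped Classical
noncomputable section

namespace OblProof

open Finset

/-- star on a `ringQuotStarRing` quotient commutes with `mk`. -/
theorem ringQuotStar_mk {R : Type} [Semiring R] [StarRing R] (r : R → R → Prop)
    (hr : ∀ a b, r a b → r (star a) (star b)) (a : R) :
    @star _ (ringQuotStarRing r hr).toStar (RingQuot.mkRingHom r a)
      = RingQuot.mkRingHom r (star a) := by
  have cond : ∀ ⦃x y : R⦄, r x y → ringQuotStarAux r x = ringQuotStarAux r y := fun x y h =>
    congrArg MulOpposite.op (RingQuot.mkRingHom_rel (hr x y h))
  show (RingQuot.lift ⟨ringQuotStarAux r, cond⟩ (RingQuot.mkRingHom r a)).unop = _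
  rw [RingQuot.lift_mkRingHom_apply]
  rfl

variable {X : Type} [Fintype X] [LinearOrder X] {ι : Type} [Fintype ι]

theorem star_toAlg (B : BCS X ι) (a : B.FreeA) :
    star (B.toAlg a) = B.toAlg (star a) := by
  have h1 : B.toAlg a = RingQuot.mkRingHom B.Rel a := by
    rw [BCS.toAlg, ← RingQuot.mkAlgHom_coe ℂ]; rfl
  have h2 : B.toAlg (star a) = RingQuot.mkRingHom B.Rel (star a) := by
    rw [BCS.toAlg, ← RingQuot.mkAlgHom_coe ℂ]; rfl
  rw [h1, h2]
  exact ringQuotStar_mk B.Rel (by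
    intro a b h
    induction h with
    | sq g => simpa [star_mul] using BCS.Rel.sq g
    | comm i x y => simpa [star_mul] using BCS.Rel.comm i y x
    | unsat i φ h => simpa using BCS.Rel.unsat_star i φ h
    | unsat_star i φ h => simpa using BCS.Rel.unsat i φ h) a

theorem gen_mul_self (B : BCS X ι) (i : ι) (x : {x // x ∈ B.V i}) :
    B.gen i x * B.gen i x = 1 := by
  have := RingQuot.mkAlgHom_rel ℂ (BCS.Rel.sq (⟨i, x⟩ : B.GenIdx))
  rw [map_mul, map_one] at this
  exact this

theorem gen_comm (B : BCS X ι) (i : ι) (x y : {x // x ∈ B.V i}) :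
    B.gen i x * B.gen i y = B.gen i y * B.gen i x := by
  have := RingQuot.mkAlgHom_rel ℂ (BCS.Rel.comm (B := B) i x y)
  rw [map_mul, map_mul] at this
  exact this

theorem star_gen (B : BCS X ι) (i : ι) (x : {x // x ∈ B.V i}) :
    star (B.gen i x) = B.gen i x := by
  rw [BCS.gen, star_toAlg, FreeAlgebra.star_ι]

/-- Key list-to-finset-product helper. -/
theorem pmap_sort_prod {α M R : Type} [LinearOrder α] [Monoid M] [CommMonoid R]
    (v : R →* M) (S : Finset α) (F : {x // x ∈ S} → R)
    (f : (x : α) → x ∈ S → M) (hf : ∀ x hx, f x hx = v (F ⟨x, hx⟩)) :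
    ((S.sort (· ≤ ·)).pmap f (fun x hx => (Finset.mem_sort _).mp hx)).prod
      = v (∏ x : {x // x ∈ S}, F x) := by
  classical
  set G' : α → R := fun x => if hx : x ∈ S then F ⟨x, hx⟩ else 1 with hG'
  have h1 : (S.sort (· ≤ ·)).pmap f (fun x hx => (Finset.mem_sort _).mp hx)
      = (S.sort (· ≤ ·)).map (fun x => v (G' x)) := by
    rw [← List.pmap_eq_map (p := fun x => x ∈ S) (f := fun x => v (G' x))
      (fun x hx => (Finset.mem_sort _).mp hx)]
    exact List.pmap_congr_left _ (fun a ha h₁ _ => by rw [hf]; simp [hG', dif_pos h₁])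
  rw [h1]
  have h2 : ((S.sort (· ≤ ·)).map fun x => v (G' x)).prod
      = v (((S.sort (· ≤ ·)).map G').prod) := by
    rw [map_list_prod, List.map_map]; rfl
  rw [h2]
  congr 1
  have h3 : ((S.sort (· ≤ ·)).map G').prod = ∏ x ∈ S, G' x := by
    rw [Finset.prod_eq_multiset_prod, ← Finset.sort_eq S (· ≤ ·)]
    rfl
  rw [h3, ← Finset.prod_attach S G', Finset.univ_eq_attach]
  exact Finset.prod_congr rfl (fun x _ => by simp [hG', dif_pos x.2])

def ctxSub (B : BCS X ι) (i : ι) : Subalgebra ℂ B.Alg :=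
  Algebra.adjoin ℂ (Set.range fun x : {x // x ∈ B.V i} => B.gen i x)

noncomputable abbrev ctxCommRing (B : BCS X ι) (i : ι) : CommRing (ctxSub B i) :=
  { (ctxSub B i).toRing with
    mul_comm := (Algebra.isMulCommutative_adjoin ℂ (by
      rintro a ⟨x, rfl⟩ b ⟨y, rfl⟩
      exact gen_comm B i x y)).is_comm.comm }

attribute [local instance] ctxCommRing

set_option maxHeartbeats 1000000
set_option synthInstance.maxHeartbeats 400000

/-- `σ_i(x)` as an element of the context subalgebra. -/
def gEl (B : BCS X ι) (i : ι) (x : {x // x ∈ B.V i}) : ctxSub B i :=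
  ⟨B.gen i x, Algebra.subset_adjoin ⟨x, rfl⟩⟩

/-- `(1 + ε σ_i(x))/2` as an element of the context subalgebra. -/
noncomputable def eEl (B : BCS X ι) (i : ι) (x : {x // x ∈ B.V i}) (ε : ℤˣ) : ctxSub B i :=
  (2⁻¹ : ℂ) • (1 + ((ε : ℤ) : ℂ) • gEl B i x)

theorem gEl_mul_self (B : BCS X ι) (i : ι) (x : {x // x ∈ B.V i}) :
    gEl B i x * gEl B i x = 1 :=
  Subtype.ext (gen_mul_self B i x)

theorem val_eEl (B : BCS X ι) (i : ι) (x : {x // x ∈ B.V i}) (ε : ℤˣ) :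
    (eEl B i x ε : B.Alg) = (2⁻¹ : ℂ) • (1 + ((ε : ℤ) : ℂ) • B.gen i x) := by
  simp [eEl, gEl]

theorem eEl_sum (B : BCS X ι) (i : ι) (x : {x // x ∈ B.V i}) :
    ∑ ε : ℤˣ, eEl B i x ε = 1 := by
  rw [show (Finset.univ : Finset ℤˣ) = {1, -1} from rfl]
  rw [Finset.sum_insert (by decide), Finset.sum_singleton]
  simp only [eEl]
  push_cast
  module

theorem eEl_mul (B : BCS X ι) (i : ι) (x : {x // x ∈ B.V i}) (ε δ : ℤˣ) :
    eEl B i x ε * eEl B i x δ = if ε = δ then eEl B i x ε else 0 := by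
  have hg := gEl_mul_self B i x
  set g := gEl B i x with hgdef
  have key : ∀ a b : ℂ, ((1 : ctxSub B i) + a • g) * (1 + b • g)
      = (1 + a * b) • 1 + (a + b) • g := by
    intro a b
    calc ((1 : ctxSub B i) + a • g) * (1 + b • g)
        = (1 + b • g) + (a • g * 1 + a • g * (b • g)) := by rw [add_mul, one_mul, mul_add]
      _ = (1 + b • g) + (a • g + (a * b) • (g * g)) := by rw [mul_one, smul_mul_smul_comm]
      _ = (1 + a * b) • 1 + (a + b) • g := by rw [hg]; module
  simp only [eEl, smul_mul_smul_comm, ← hgdef, key]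
  rcases Int.units_eq_one_or ε with rfl | rfl <;> rcases Int.units_eq_one_or δ with rfl | rfl <;>
    norm_num <;> module

/-- `g = e₊ - e₋` in sum form. -/
theorem gEl_eq_sum (B : BCS X ι) (i : ι) (x : {x // x ∈ B.V i}) :
    gEl B i x = ∑ ε : ℤˣ, ((ε : ℤ) : ℂ) • eEl B i x ε := by
  rw [show (Finset.univ : Finset ℤˣ) = {1, -1} from rfl]
  rw [Finset.sum_insert (by decide), Finset.sum_singleton]
  simp only [eEl, smul_smul]
  push_cast
  module

/-- `Φ_{V_i,φ}` as a product in the context subalgebra. -/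
theorem phi_eq (B : BCS X ι) (i : ι) (φ : B.Asn i) :
    B.phi i φ = ((∏ x : {x // x ∈ B.V i}, eEl B i x (φ x) : ctxSub B i) : B.Alg) := by
  rw [BCS.phi, BCS.phiFree, BCS.phiFreeOn, map_list_prod, List.map_pmap]
  exact pmap_sort_prod ((ctxSub B i).val : ctxSub B i →ₐ[ℂ] B.Alg).toRingHom.toMonoidHom
    (B.V i) (fun x => eEl B i ⟨x, x.2⟩ (φ x)) _ (fun x hx => by
      simp only [BCS.toAlg, map_smul, map_add, map_one]
      rw [show ((ctxSub B i).val : ctxSub B i →ₐ[ℂ] B.Alg).toRingHom.toMonoidHom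
          (eEl B i ⟨x, hx⟩ (φ ⟨x, hx⟩))
          = ((eEl B i ⟨x, hx⟩ (φ ⟨x, hx⟩) : ctxSub B i) : B.Alg) from rfl, val_eEl]
      change B.toAlg _ = _
      rw [map_smul, map_add, map_one, map_smul]
      rfl)


theorem list_pairwise_total {α : Type} {R : α → α → Prop} (h : ∀ a b, R a b) :
    ∀ l : List α, l.Pairwise R := by
  intro l
  induction l with
  | nil => exact .nil
  | cons a t ih => exact .cons (fun b _ => h a b) ih

theorem star_list_prod {M : Type} [Monoid M] [StarMul M] (l : List M) :
    star l.prod = (l.reverse.map star).prod := by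
  induction l with
  | nil => simp
  | cons a t ih => simp [star_mul, ih]

theorem prod_smul_c {κ R : Type} [Fintype κ] [CommRing R] [Algebra ℂ R]
    (c : κ → ℂ) (f : κ → R) :
    ∏ k, c k • f k = (∏ k, c k) • ∏ k, f k := by
  classical
  have : ∀ s : Finset κ, ∏ k ∈ s, c k • f k = (∏ k ∈ s, c k) • ∏ k ∈ s, f k := by
    intro s
    induction s using Finset.cons_induction with
    | empty => simp
    | cons a s ha ih =>
        rw [Finset.prod_cons, Finset.prod_cons, Finset.prod_cons, ih, smul_mul_smul_comm]
  exact this Finset.univ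

theorem prod_ite_zero' {β M : Type} [Fintype β] [CommMonoidWithZero M]
    (p : β → Prop) [DecidablePred p] (f : β → M) :
    (∏ b, if p b then f b else 0) = if ∀ b, p b then ∏ b, f b else 0 := by
  by_cases h : ∀ b, p b
  · rw [if_pos h]; exact Finset.prod_congr rfl fun b _ => if_pos (h b)
  · rw [if_neg h]
    push_neg at h
    obtain ⟨b, hb⟩ := h
    exact Finset.prod_eq_zero (Finset.mem_univ b) (if_neg hb)

section Obl

variable (B : BCS X ι) (n : ℕ) (hn : 0 < n) [LinearOrder (X × Fin n)]

/-- The variable `x(k)` of the obliviated context `U_i`. -/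
def zk (i : ι) (x : {x // x ∈ B.V i}) (k : Fin n) : {z // z ∈ (B.obl n hn).V i} :=
  ⟨(x.1, k), BCS.mem_obl_V x.2 k⟩

def idxEquiv (i : ι) : {x // x ∈ B.V i} × Fin n ≃ {z // z ∈ (B.obl n hn).V i} where
  toFun p := zk B n hn i p.1 p.2
  invFun z := (⟨z.1.1, (Finset.mem_product.mp z.2).1⟩, z.1.2)
  left_inv p := rfl
  right_inv z := rfl

/-- The assignment-decomposition equivalence. -/
def asnEquiv (i : ι) : (B.obl n hn).Asn i ≃ ({x // x ∈ B.V i} → Fin n → ℤˣ) :=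
  ((Equiv.arrowCongr (idxEquiv B n hn i) (Equiv.refl ℤˣ)).symm).trans
    (Equiv.curry _ _ _)

theorem asnEquiv_apply (i : ι) (ψ : (B.obl n hn).Asn i) (x : {x // x ∈ B.V i}) (k : Fin n) :
    asnEquiv B n hn i ψ x k = ψ (zk B n hn i x k) := rfl

/-- `σ_i(x(1)⋯x(n))` as a list product. -/
noncomputable def bigGenL (i : ι) (x : {x // x ∈ B.V i}) : (B.obl n hn).Alg :=
  ((List.finRange n).map fun k => (B.obl n hn).gen i (zk B n hn i x k)).prod

noncomputable def bigGenEl (i : ι) (x : {x // x ∈ B.V i}) : ctxSub (B.obl n hn) i :=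
  ∏ k : Fin n, gEl (B.obl n hn) i (zk B n hn i x k)

theorem val_bigGen (i : ι) (x : {x // x ∈ B.V i}) :
    bigGenL B n hn i x = (bigGenEl B n hn i x : (B.obl n hn).Alg) := by
  symm
  show (((ctxSub (B.obl n hn) i).val : _ →ₐ[ℂ] (B.obl n hn).Alg).toRingHom.toMonoidHom)
      (bigGenEl B n hn i x) = _
  rw [bigGenEl, Fin.prod_univ_def, map_list_prod, List.map_map, bigGenL]
  rfl

noncomputable def eBigEl (i : ι) (x : {x // x ∈ B.V i}) (ε : ℤˣ) : ctxSub (B.obl n hn) i :=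
  (2⁻¹ : ℂ) • (1 + ((ε : ℤ) : ℂ) • bigGenEl B n hn i x)

theorem bigGenEl_mul_self (i : ι) (x : {x // x ∈ B.V i}) :
    bigGenEl B n hn i x * bigGenEl B n hn i x = 1 := by
  rw [bigGenEl, ← Finset.prod_mul_distrib]
  rw [Finset.prod_congr rfl fun k _ => gEl_mul_self (B.obl n hn) i (zk B n hn i x k)]
  exact Finset.prod_const_one

theorem star_bigGenL (i : ι) (x : {x // x ∈ B.V i}) :
    star (bigGenL B n hn i x) = bigGenL B n hn i x := by
  rw [bigGenL, star_list_prod, ← List.map_reverse, List.map_map]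
  have h1 : ((List.finRange n).reverse.map
        (star ∘ fun k => (B.obl n hn).gen i (zk B n hn i x k)))
      = ((List.finRange n).reverse.map fun k => (B.obl n hn).gen i (zk B n hn i x k)) :=
    List.map_congr_left fun k _ => star_gen (B.obl n hn) i (zk B n hn i x k)
  rw [h1]
  refine List.Perm.prod_eq' ?_ ?_
  · exact (List.reverse_perm _).map _
  · rw [List.pairwise_map]
    exact list_pairwise_total (fun a b => gen_comm (B.obl n hn) i _ _) _

/-- Single-variable expansion. -/
theorem expand_one (i : ι) (x : {x // x ∈ B.V i}) (ε : ℤˣ) :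
    eBigEl B n hn i x ε = ∑ v : Fin n → ℤˣ,
      if (∏ k, v k) = ε then ∏ k, eEl (B.obl n hn) i (zk B n hn i x k) (v k) else 0 := by
  classical
  have h1 : (1 : ctxSub (B.obl n hn) i)
      = ∑ v : Fin n → ℤˣ, ∏ k, eEl (B.obl n hn) i (zk B n hn i x k) (v k) := by
    rw [← Fintype.piFinset_univ, ← Finset.prod_univ_sum]
    exact (Finset.prod_eq_one fun k _ => eEl_sum (B.obl n hn) i (zk B n hn i x k)).symm
  have h2 : bigGenEl B n hn i x = ∑ v : Fin n → ℤˣ,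
      ((((∏ k, v k : ℤˣ) : ℤ) : ℂ)) • ∏ k, eEl (B.obl n hn) i (zk B n hn i x k) (v k) := by
    rw [bigGenEl,
      Finset.prod_congr rfl fun k _ => gEl_eq_sum (B.obl n hn) i (zk B n hn i x k),
      Finset.prod_univ_sum, Fintype.piFinset_univ]
    refine Finset.sum_congr rfl fun v _ => ?_
    rw [prod_smul_c]
    congr 1
    push_cast
    rfl
  rw [eBigEl, h2, Finset.smul_sum]
  conv_lhs => rw [h1]
  rw [← Finset.sum_add_distrib, Finset.smul_sum]
  refine Finset.sum_congr rfl fun v _ => ?_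
  rw [smul_smul]
  by_cases h : (∏ k, v k) = ε
  · have hε : ((ε : ℤ) : ℂ) * ((ε : ℤ) : ℂ) = 1 := by
      rcases Int.units_eq_one_or ε with rfl | rfl <;> norm_num
    rw [if_pos h, h, hε]
    module
  · have hv : (∏ k, v k) = -ε := by
      revert h; generalize (∏ k, v k) = u
      rcases Int.units_eq_one_or ε with rfl | rfl <;>
        rcases Int.units_eq_one_or u with rfl | rfl <;> decide
    have hε : ((ε : ℤ) : ℂ) * (((-ε : ℤˣ) : ℤ) : ℂ) = -1 := by
      rcases Int.units_eq_one_or ε with rfl | rfl <;> norm_num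
    rw [if_neg h, hv, hε]
    module

/-- Full expansion. -/
theorem expand (i : ι) (φ : B.Asn i) :
    (∏ x : {x // x ∈ B.V i}, eBigEl B n hn i x (φ x))
      = ∑ ψ : (B.obl n hn).Asn i,
          if (fun x : {x // x ∈ B.V i} => ∏ k, ψ (zk B n hn i x k)) = φ
          then ∏ z, eEl (B.obl n hn) i z (ψ z) else 0 := by
  classical
  rw [Finset.prod_congr rfl fun x _ => expand_one B n hn i x (φ x),
    Finset.prod_univ_sum, Fintype.piFinset_univ]
  refine (Fintype.sum_equiv (asnEquiv B n hn i) _ _ fun ψ => ?_).symm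
  rw [prod_ite_zero']
  refine if_congr ?_ ?_ rfl
  · constructor
    · intro h b; exact congrFun h b
    · intro h; funext x; exact h x
  · rw [← Equiv.prod_comp (idxEquiv B n hn i) (fun z => eEl (B.obl n hn) i z (ψ z)),
      Fintype.prod_prod_type]
    rfl

end Obl


theorem phi_unsat_zero' (B : BCS X ι) (i : ι) (φ : B.Asn i) (h : φ ∉ B.C i) :
    B.phi i φ = 0 := by
  have := RingQuot.mkAlgHom_rel ℂ (BCS.Rel.unsat i φ h)
  rw [map_zero] at this
  exact this

theorem star_algebraMap_alg (B : BCS X ι) (c : ℂ) :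
    star (algebraMap ℂ B.Alg c) = algebraMap ℂ B.Alg c := by
  rw [← (B.toAlg).commutes c, star_toAlg, FreeAlgebra.star_algebraMap]

section Hom

variable (B : BCS X ι) (n : ℕ) (hn : 0 < n) [LinearOrder (X × Fin n)]

noncomputable def alphaFree : B.FreeA →ₐ[ℂ] (B.obl n hn).Alg :=
  FreeAlgebra.lift ℂ fun g : B.GenIdx => bigGenL B n hn g.1 g.2

theorem alphaFree_ι (g : B.GenIdx) :
    alphaFree B n hn (FreeAlgebra.ι ℂ g) = bigGenL B n hn g.1 g.2 :=
  FreeAlgebra.lift_ι_apply _ _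

theorem alphaFree_phiFree (i : ι) (φ : B.Asn i) :
    alphaFree B n hn (B.phiFree i φ)
      = ((∏ x : {x // x ∈ B.V i}, eBigEl B n hn i x (φ x) :
          ctxSub (B.obl n hn) i) : (B.obl n hn).Alg) := by
  rw [BCS.phiFree, BCS.phiFreeOn, map_list_prod, List.map_pmap]
  exact pmap_sort_prod
    (((ctxSub (B.obl n hn) i).val : _ →ₐ[ℂ] (B.obl n hn).Alg).toRingHom.toMonoidHom)
    (B.V i) (fun x => eBigEl B n hn i x (φ x)) _ (fun x hx => by
      simp only [map_smul, map_add, map_one]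
      rw [alphaFree_ι B n hn (⟨i, ⟨x, hx⟩⟩ : B.GenIdx), val_bigGen]
      rfl)

theorem alphaFree_phi (i : ι) (φ : B.Asn i) :
    alphaFree B n hn (B.phiFree i φ) = ∑ ψ : (B.obl n hn).Asn i,
      if (fun x : {x // x ∈ B.V i} => ∏ k, ψ (zk B n hn i x k)) = φ
      then (B.obl n hn).phi i ψ else 0 := by
  classical
  rw [alphaFree_phiFree, expand, AddSubmonoidClass.coe_finset_sum]
  refine Finset.sum_congr rfl fun ψ _ => ?_
  rw [apply_ite (fun t : ctxSub (B.obl n hn) i => (t : (B.obl n hn).Alg)),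
    ZeroMemClass.coe_zero, ← phi_eq]

theorem bigGenL_mul_self (i : ι) (x : {x // x ∈ B.V i}) :
    bigGenL B n hn i x * bigGenL B n hn i x = 1 := by
  rw [val_bigGen, ← MulMemClass.coe_mul, bigGenEl_mul_self, OneMemClass.coe_one]

theorem bigGenL_comm (i : ι) (x y : {x // x ∈ B.V i}) :
    bigGenL B n hn i x * bigGenL B n hn i y = bigGenL B n hn i y * bigGenL B n hn i x := by
  rw [val_bigGen, val_bigGen, ← MulMemClass.coe_mul, ← MulMemClass.coe_mul, mul_comm]

theorem alphaFree_star (a : B.FreeA) :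
    alphaFree B n hn (star a) = star (alphaFree B n hn a) := by
  refine FreeAlgebra.induction ℂ B.GenIdx
    (motive := fun a => alphaFree B n hn (star a) = star (alphaFree B n hn a)) ?_ ?_ ?_ ?_ a
  · intro r
    rw [FreeAlgebra.star_algebraMap, AlgHom.commutes, star_algebraMap_alg]
  · intro g
    rw [FreeAlgebra.star_ι, alphaFree_ι]
    exact (star_bigGenL B n hn g.1 g.2).symm
  · intro a b ha hb
    rw [star_mul, map_mul, ha, hb, map_mul, ← star_mul]
  · intro a b ha hb
    rw [star_add, map_add, ha, hb, map_add, ← star_add]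

theorem alphaFree_unsat (i : ι) (φ : B.Asn i) (h : φ ∉ B.C i) :
    alphaFree B n hn (B.phiFree i φ) = 0 := by
  classical
  rw [alphaFree_phi]
  refine Finset.sum_eq_zero fun ψ _ => ?_
  split_ifs with hc
  · refine phi_unsat_zero' (B.obl n hn) i ψ (fun hmem => h ?_)
    have hmem' : (fun x : {x // x ∈ B.V i} => ∏ k, ψ (zk B n hn i x k)) ∈ B.C i := hmem
    rwa [hc] at hmem'
  · rfl

theorem rel_holds : ∀ ⦃a b : B.FreeA⦄, B.Rel a b → alphaFree B n hn a = alphaFree B n hn b := by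
  intro a b h
  induction h with
  | sq g =>
      rw [map_mul, map_one, alphaFree_ι]
      exact bigGenL_mul_self B n hn g.1 g.2
  | comm i x y =>
      rw [map_mul, map_mul, alphaFree_ι B n hn (⟨i, x⟩ : B.GenIdx),
        alphaFree_ι B n hn (⟨i, y⟩ : B.GenIdx)]
      exact bigGenL_comm B n hn i x y
  | unsat i φ h =>
      rw [map_zero]
      exact alphaFree_unsat B n hn i φ h
  | unsat_star i φ h =>
      rw [map_zero, alphaFree_star, alphaFree_unsat B n hn i φ h, star_zero]

noncomputable def alphaA : B.Alg →ₐ[ℂ] (B.obl n hn).Alg :=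
  RingQuot.liftAlgHom ℂ ⟨alphaFree B n hn, rel_holds B n hn⟩

theorem alphaA_toAlg (a : B.FreeA) : alphaA B n hn (B.toAlg a) = alphaFree B n hn a :=
  RingQuot.liftAlgHom_mkAlgHom_apply ℂ _ _ a

noncomputable def alphaS : B.Alg →⋆ₐ[ℂ] (B.obl n hn).Alg :=
  { alphaA B n hn with
    map_star' := by
      intro y
      obtain ⟨a, rfl⟩ := RingQuot.mkAlgHom_surjective ℂ B.Rel y
      show alphaA B n hn (star (B.toAlg a)) = star (alphaA B n hn (B.toAlg a))
      rw [star_toAlg, alphaA_toAlg, alphaA_toAlg, alphaFree_star] }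

theorem alphaS_apply (a : B.Alg) : alphaS B n hn a = alphaA B n hn a := rfl

end Hom


end OblProof


/-- There is a well-defined `*`-homomorphism
`α : 𝒜(B) → 𝒜(Obl_n(B))` with `α(σ_i(x)) = σ_i(x(1)⋯x(n))`, and it is a classical
homomorphism. -/
theorem obliviation_classicalHom
    {X ι : Type} [Fintype X] [LinearOrder X] [Fintype ι]
    (B : BCS X ι) (n : ℕ) (hn : 0 < n) [LinearOrder (X × Fin n)] :
    ∃ α : B.Alg →⋆ₐ[ℂ] (B.obl n hn).Alg,
      (∀ (i : ι) (x : X) (hx : x ∈ B.V i),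
        α (B.gen i ⟨x, hx⟩) =
          ((List.finRange n).map fun k =>
            (B.obl n hn).gen i ⟨(x, k), BCS.mem_obl_V hx k⟩).prod) ∧
      BCS.IsClassicalHom B (B.obl n hn) α := by
  classical
  refine ⟨OblProof.alphaS B n hn, ?_, ?_⟩
  · intro i x hx
    show OblProof.alphaA B n hn (B.gen i ⟨x, hx⟩) = _
    rw [BCS.gen, OblProof.alphaA_toAlg, OblProof.alphaFree_ι B n hn (⟨i, ⟨x, hx⟩⟩ : B.GenIdx)]
    rfl
  · refine ⟨fun i ψ => fun x => ∏ k, ψ (OblProof.zk B n hn i x k), ?_, ?_, ?_⟩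
    · intro i ψ hψ
      exact hψ
    · intro i φ hφ
      show OblProof.alphaA B n hn (B.phi i φ) = _
      rw [BCS.phi, OblProof.alphaA_toAlg, OblProof.alphaFree_phi]
      refine Finset.sum_congr (by congr!) fun ψ _ => ?_
      refine if_congr ?_ rfl rfl
      constructor
      · intro h
        refine ⟨?_, h⟩
        show (fun x : {x // x ∈ B.V i} => ∏ k, ψ (OblProof.zk B n hn i x k)) ∈ B.C i
        rw [h]; exact hφ
      · intro h
        exact h.2
    · intro i j φ ψ hφ hψ hdis
      obtain ⟨x, hi, hj, hne⟩ := hdis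
      by_contra hcon
      simp only [BCS.Disagree, not_exists] at hcon
      push_neg at hcon
      exact hne (Finset.prod_congr rfl fun k _ =>
        hcon (x, k) (BCS.mem_obl_V hi k) (BCS.mem_obl_V hj k))
end
end

section
/- Let B = (X, {(V_i, C_i)}_{i=1}^m) be a BCS and let Obl_n(B) = (Z, {(U_i, E_i)}_{i=1}^m) be its degree-n obliviation. Then for every i ∈ [m], the set of monomials {∏_{x∈S} x : S ⊆ U_i, |S| < n/2} is linearly independent in the algebra 𝒜(U_i, E_i). -/
open scoped Classical
noncomputable section

/-- The (ordered) monomial `∏_{x ∈ S} σ_i(x)` in `𝒜(B)`, for `S ⊆ V_i`. -/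
def BCS.monomialOn {X ι : Type} [Fintype X] [LinearOrder X] [Fintype ι]
    (B : BCS X ι) (i : ι) (S : Finset X) (hS : S ⊆ B.V i) : B.Alg :=
  ((S.sort (· ≤ ·)).pmap (fun x hx => B.gen i ⟨x, hS hx⟩)
    (fun x hx => (Finset.mem_sort _).mp hx)).prod


open scoped Classical
noncomputable section

namespace OblProof
open BCS

lemma prod_pmap_sort {Z M : Type} [LinearOrder Z] [CommMonoid M] (S : Finset Z)
    (f : ∀ x, x ∈ S → M) :
    ((S.sort (· ≤ ·)).pmap f (fun x hx => (Finset.mem_sort _).mp hx)).prod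
      = ∏ x ∈ S.attach, f x.1 x.2 := by
  rw [← Multiset.prod_coe, ← Multiset.coe_pmap]
  have key : ∀ (m : Multiset Z) (hm : m = S.val) (h : ∀ x ∈ m, x ∈ S),
      (Multiset.pmap f m h).prod = ∏ x ∈ S.attach, f x.1 x.2 := by
    intro m hm h
    subst hm
    rw [Multiset.pmap_eq_map_attach]
    rfl
  exact key _ (Finset.sort_eq _ _) _

lemma units_sq_cast (u : ℤˣ) : ((u : ℤ) : ℂ) * ((u : ℤ) : ℂ) = 1 := by
  rcases Int.units_eq_one_or u with h | h <;> simp [h]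

variable {Z : Type} [Fintype Z] [LinearOrder Z]

abbrev EA (B : BCS Z Unit) := {ψ : B.Asn () // ψ ∈ B.C ()}

def chi0 (B : BCS Z Unit) (S : Finset Z) (ψ : B.Asn ()) : ℂ :=
  ∏ z ∈ (B.V ()).attach,
    @ite ℂ (z.1 ∈ S) (Classical.propDecidable _) ((ψ z : ℤ) : ℂ) 1

lemma chi0_empty (B : BCS Z Unit) (ψ : B.Asn ()) : chi0 B ∅ ψ = 1 := by
  simp [chi0]

lemma chi0_eq (B : BCS Z Unit) (S : Finset Z) (hS : S ⊆ B.V ()) (ψ : B.Asn ()) :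
    chi0 B S ψ = ∏ x ∈ S.attach, ((ψ ⟨x.1, hS x.2⟩ : ℤ) : ℂ) := by
  set F : {z // z ∈ B.V ()} → ℂ :=
    fun z => @ite ℂ (z.1 ∈ S) (Classical.propDecidable _) ((ψ z : ℤ) : ℂ) 1 with hF
  set emb : {x // x ∈ S} → {z // z ∈ B.V ()} := fun x => ⟨x.1, hS x.2⟩ with hemb
  have hinj : ∀ a ∈ S.attach, ∀ b ∈ S.attach, emb a = emb b → a = b := by
    intro a _ b _ h
    have : (emb a).1 = (emb b).1 := congrArg Subtype.val h
    exact Subtype.ext this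
  have himg : S.attach.image emb ⊆ (B.V ()).attach := fun z _ => Finset.mem_attach _ _
  have hout : ∀ z ∈ (B.V ()).attach, z ∉ S.attach.image emb → F z = 1 := by
    intro z _ hz
    refine if_neg ?_
    intro hzS
    exact hz (Finset.mem_image.mpr ⟨⟨z.1, hzS⟩, Finset.mem_attach _ _, Subtype.ext rfl⟩)
  have h1 : chi0 B S ψ = ∏ z ∈ S.attach.image emb, F z :=
    (Finset.prod_subset himg hout).symm
  rw [h1, Finset.prod_image hinj]
  refine Finset.prod_congr rfl ?_
  intro x _
  exact if_pos x.2

lemma chi0_mul (B : BCS Z Unit) (S S' T : Finset Z)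
    (hT : ∀ z, z ∈ T ↔ (z ∈ S ∧ z ∉ S') ∨ (z ∈ S' ∧ z ∉ S)) (ψ : B.Asn ()) :
    chi0 B S ψ * chi0 B S' ψ = chi0 B T ψ := by
  unfold chi0
  rw [← Finset.prod_mul_distrib]
  refine Finset.prod_congr rfl ?_
  intro z _
  by_cases h1 : z.1 ∈ S <;> by_cases h2 : z.1 ∈ S' <;>
    simp [hT, h1, h2, units_sq_cast]

def F0 (B : BCS Z Unit) : B.FreeA →ₐ[ℂ] (EA B → ℂ) :=
  FreeAlgebra.lift ℂ (fun g => fun ψ => ((ψ.1 g.2 : ℤ) : ℂ))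

lemma F0_ι (B : BCS Z Unit) (g : B.GenIdx) :
    F0 B (FreeAlgebra.ι ℂ g) = fun ψ : EA B => ((ψ.1 g.2 : ℤ) : ℂ) :=
  FreeAlgebra.lift_ι_apply _ _

lemma F0_star (B : BCS Z Unit) (a : B.FreeA) : F0 B (star a) = F0 B a := by
  induction a using FreeAlgebra.induction with
  | grade0 r => rw [FreeAlgebra.star_algebraMap]
  | grade1 x => rw [FreeAlgebra.star_ι]
  | mul a b ha hb => rw [star_mul, map_mul, map_mul, ha, hb, mul_comm]
  | add a b ha hb => rw [star_add, map_add, map_add, ha, hb]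

lemma F0_phiFreeOn (B : BCS Z Unit) (S : Finset Z) (hS : S ⊆ B.V ())
    (φ : {x // x ∈ S} → ℤˣ) (ψ : EA B) :
    F0 B (B.phiFreeOn () S hS φ) ψ =
      ∏ x ∈ S.attach,
        ((2⁻¹ : ℂ) * (1 + ((φ x : ℤ) : ℂ) * ((ψ.1 ⟨x.1, hS x.2⟩ : ℤ) : ℂ))) := by
  unfold BCS.phiFreeOn
  rw [map_list_prod, List.map_pmap, prod_pmap_sort, Finset.prod_apply]
  refine Finset.prod_congr rfl ?_
  intro x _
  simp [F0, smul_eq_mul, mul_add]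

lemma F0_phiFree_unsat (B : BCS Z Unit) (φ : B.Asn ()) (h : φ ∉ B.C ()) :
    F0 B (B.phiFree () φ) = 0 := by
  funext ψ
  rw [Pi.zero_apply]
  have : B.phiFree () φ = B.phiFreeOn () (B.V ()) (subset_refl _) φ := rfl
  rw [this, F0_phiFreeOn]
  have hne : φ ≠ ψ.1 := fun he => h (he ▸ ψ.2)
  obtain ⟨x, hx⟩ := Function.ne_iff.mp hne
  refine Finset.prod_eq_zero (Finset.mem_attach _ x) ?_
  have hxx : ∀ h : x.1 ∈ B.V (), (⟨x.1, h⟩ : {y // y ∈ B.V ()}) = x :=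
    fun h => Subtype.ext rfl
  rw [hxx]
  rcases Int.units_eq_one_or (φ x) with h1 | h1 <;>
    rcases Int.units_eq_one_or (ψ.1 x) with h2 | h2 <;>
      first
        | (exfalso; exact hx (h1.trans h2.symm))
        | (rw [h1, h2]; norm_num)

lemma F0_rel (B : BCS Z Unit) : ∀ ⦃a b : B.FreeA⦄, B.Rel a b → F0 B a = F0 B b := by
    intro a b h
    induction h with
    | sq g =>
      funext ψ
      simp [map_mul, F0_ι, units_sq_cast]
    | comm i x y =>
      rw [map_mul, map_mul, mul_comm]
    | unsat i φ h =>
      rw [map_zero]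
      exact F0_phiFree_unsat B φ h
    | unsat_star i φ h =>
      rw [map_zero, F0_star]
      exact F0_phiFree_unsat B φ h

def GG (B : BCS Z Unit) : B.Alg →ₐ[ℂ] (EA B → ℂ) :=
  RingQuot.liftAlgHom ℂ ⟨F0 B, F0_rel B⟩

lemma GG_toAlg (B : BCS Z Unit) (a : B.FreeA) : GG B (B.toAlg a) = F0 B a := by
  unfold GG BCS.toAlg
  exact RingQuot.liftAlgHom_mkAlgHom_apply ℂ (F0 B) (F0_rel B) a

lemma GG_monomialOn (B : BCS Z Unit) (S : Finset Z) (hS : S ⊆ B.V ()) (ψ : EA B) :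
    GG B (B.monomialOn () S hS) ψ = chi0 B S ψ.1 := by
  unfold BCS.monomialOn
  rw [map_list_prod, List.map_pmap, prod_pmap_sort, Finset.prod_apply, chi0_eq B S hS]
  refine Finset.prod_congr rfl ?_
  intro x _
  show GG B (B.gen () ⟨x.1, hS x.2⟩) ψ = _
  unfold BCS.gen
  rw [GG_toAlg, F0_ι]


section Obl

variable {X ι : Type} [Fintype X] [LinearOrder X] [Fintype ι]

lemma sum_chi0_zero (B : BCS X ι) (n : ℕ) (hn : 0 < n) [LinearOrder (X × Fin n)] (i : ι)
    (T : Finset (X × Fin n)) (hT : T ⊆ ((B.obl n hn).single i).V ())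
    (hne : T.Nonempty) (hcard : T.card < n) :
    ∑ ψ : EA ((B.obl n hn).single i), chi0 ((B.obl n hn).single i) T ψ.1 = 0 := by
  set B' := (B.obl n hn).single i with hB'
  obtain ⟨z0, hz0⟩ := hne
  obtain ⟨x0, k0⟩ := z0
  have hx0 : x0 ∈ B.V i := (Finset.mem_product.mp (hT hz0)).1
  have hk1 : ∃ k1 : Fin n, (x0, k1) ∉ T := by
    by_contra hc
    push_neg at hc
    have himg : (Finset.univ.image fun k : Fin n => (x0, k)) ⊆ T := by
      intro z hz
      obtain ⟨k, _, rfl⟩ := Finset.mem_image.mp hz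
      exact hc k
    have hcard2 : (Finset.univ.image fun k : Fin n => (x0, k)).card = n := by
      rw [Finset.card_image_of_injective _ (fun a b h => by simpa using h),
        Finset.card_univ, Fintype.card_fin]
    have := Finset.card_le_card himg
    omega
  obtain ⟨k1, hk1⟩ := hk1
  have hk01 : k1 ≠ k0 := fun h => hk1 (h ▸ hz0)
  let flipA : B'.Asn () → B'.Asn () := fun ψ z =>
    if z.1 = (x0, k0) ∨ z.1 = (x0, k1) then -ψ z else ψ z
  have hflip : ∀ (ψ : B'.Asn ()) z,
      flipA ψ z = if z.1 = (x0, k0) ∨ z.1 = (x0, k1) then -ψ z else ψ z := fun _ _ => rfl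
  have hinv : ∀ ψ, flipA (flipA ψ) = ψ := by
    intro ψ; funext z
    by_cases h : z.1 = (x0, k0) ∨ z.1 = (x0, k1) <;> simp [hflip, h]
  have hpres : ∀ ψ, ψ ∈ B'.C () → flipA ψ ∈ B'.C () := by
    intro ψ hψ
    have key : (fun x : {x // x ∈ B.V i} => ∏ k : Fin n,
          flipA ψ ⟨(x.1, k), Finset.mem_product.mpr ⟨x.2, Finset.mem_univ _⟩⟩)
        = (fun x : {x // x ∈ B.V i} => ∏ k : Fin n,
          ψ ⟨(x.1, k), Finset.mem_product.mpr ⟨x.2, Finset.mem_univ _⟩⟩) := by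
      funext x
      by_cases hx : x.1 = x0
      · have hterm : ∀ k : Fin n,
            flipA ψ ⟨(x.1, k), Finset.mem_product.mpr ⟨x.2, Finset.mem_univ _⟩⟩
              = (if k = k0 ∨ k = k1 then (-1 : ℤˣ) else 1) *
                ψ ⟨(x.1, k), Finset.mem_product.mpr ⟨x.2, Finset.mem_univ _⟩⟩ := by
          intro k
          by_cases h : k = k0 ∨ k = k1 <;> simp [hflip, hx, Prod.ext_iff, h]
        rw [Finset.prod_congr rfl (fun k _ => hterm k), Finset.prod_mul_distrib]
        have hsign : (∏ k : Fin n, if k = k0 ∨ k = k1 then (-1 : ℤˣ) else 1) = 1 := by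
          have hmem : ∀ k : Fin n, (if k = k0 ∨ k = k1 then (-1 : ℤˣ) else 1)
              = if k ∈ ({k0, k1} : Finset (Fin n)) then (-1 : ℤˣ) else 1 := by
            intro k; simp [Finset.mem_insert, Finset.mem_singleton]
          rw [Finset.prod_congr rfl (fun k _ => hmem k), Finset.prod_ite_mem,
            Finset.univ_inter, Finset.prod_const,
            Finset.card_insert_of_notMem (by simp only [Finset.mem_singleton]; exact fun h => hk01 h.symm),
            Finset.card_singleton]
          exact neg_one_sq
        rw [hsign, one_mul]
      · refine Finset.prod_congr rfl ?_
        intro k _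
        have hcond : ¬((x.1, k) = (x0, k0) ∨ (x.1, k) = (x0, k1)) := by
          rintro (h | h) <;> exact hx (congrArg Prod.fst h)
        rw [hflip, if_neg hcond]
    show (fun x : {x // x ∈ B.V i} => ∏ k : Fin n,
        flipA ψ ⟨(x.1, k), Finset.mem_product.mpr ⟨x.2, Finset.mem_univ _⟩⟩) ∈ B.C i
    rw [key]
    exact hψ
  have hchi : ∀ ψ : B'.Asn (), chi0 B' T (flipA ψ) = - chi0 B' T ψ := by
    intro ψ
    unfold chi0
    have hterm : ∀ z : {z // z ∈ B'.V ()},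
        (@ite ℂ (z.1 ∈ T) (Classical.propDecidable _) ((flipA ψ z : ℤ) : ℂ) 1)
          = (if z.1 = (x0, k0) then (-1 : ℂ) else 1) *
            (@ite ℂ (z.1 ∈ T) (Classical.propDecidable _) ((ψ z : ℤ) : ℂ) 1) := by
      intro z
      by_cases h0 : z.1 = (x0, k0)
      · have hzT : z.1 ∈ T := h0 ▸ hz0
        rw [if_pos hzT, if_pos hzT, if_pos h0, hflip, if_pos (Or.inl h0)]
        push_cast
        ring
      · by_cases h1 : z.1 = (x0, k1)
        · have hzT : z.1 ∉ T := h1 ▸ hk1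
          simp [hzT, h0]
        · have hno : ¬(z.1 = (x0, k0) ∨ z.1 = (x0, k1)) := by rintro (h | h) <;> tauto
          rw [hflip, if_neg hno, if_neg h0, one_mul]
    refine (Finset.prod_congr rfl (fun z _ => hterm z)).trans ?_
    rw [Finset.prod_mul_distrib]
    have hone : (∏ z ∈ (B'.V ()).attach, if z.1 = (x0, k0) then (-1 : ℂ) else 1) = -1 := by
      rw [Finset.prod_eq_single (⟨(x0, k0), hT hz0⟩ : {z // z ∈ B'.V ()})]
      · simp
      · intro b _ hb
        have hb1 : b.1 ≠ (x0, k0) := fun h => hb (Subtype.ext h)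
        simp [hb1]
      · intro h; exact absurd (Finset.mem_attach _ _) h
    rw [hone]
    ring
  let σ : EA B' ≃ EA B' :=
    { toFun := fun ψ => ⟨flipA ψ.1, hpres ψ.1 ψ.2⟩
      invFun := fun ψ => ⟨flipA ψ.1, hpres ψ.1 ψ.2⟩
      left_inv := fun ψ => Subtype.ext (hinv ψ.1)
      right_inv := fun ψ => Subtype.ext (hinv ψ.1) }
  have h1 : ∑ ψ : EA B', chi0 B' T ψ.1 = ∑ ψ : EA B', chi0 B' T (σ ψ).1 :=
    (Equiv.sum_comp σ (fun ψ => chi0 B' T ψ.1)).symm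
  have h2 : ∑ ψ : EA B', chi0 B' T (σ ψ).1 = - ∑ ψ : EA B', chi0 B' T ψ.1 := by
    rw [← Finset.sum_neg_distrib]
    exact Finset.sum_congr rfl (fun ψ _ => hchi ψ.1)
  have h3 := h1.trans h2
  have h4 : (∑ ψ : EA B', chi0 B' T ψ.1) + (∑ ψ : EA B', chi0 B' T ψ.1) = 0 := by
    nth_rewrite 1 [h3]; ring
  exact add_self_eq_zero.mp h4

end Obl

end OblProof

/-- In the algebra `𝒜(U_i, E_i)` of a context of the degree-`n`
obliviation, the monomials `∏_{x∈S} x` over subsets `S ⊆ U_i` with `|S| < n/2` are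
linearly independent. -/
theorem obliviation_monomials_linearIndependent
    {X ι : Type} [Fintype X] [LinearOrder X] [Fintype ι]
    (B : BCS X ι) (n : ℕ) (hn : 0 < n) [LinearOrder (X × Fin n)] (i : ι) :
    LinearIndependent ℂ
      (fun S : {S : Finset (X × Fin n) // S ⊆ (B.obl n hn).V i ∧ 2 * S.card < n} =>
        ((B.obl n hn).single i).monomialOn () S.1 S.2.1) := by
  set B' := (B.obl n hn).single i with hB'
  haveI hNE : Nonempty (OblProof.EA B') := by
    obtain ⟨ψ0, h0⟩ := B'.hC ()
    exact ⟨⟨ψ0, h0⟩⟩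
  rw [linearIndependent_iff']
  intro s g hsum j0 hj0
  have happ : ∀ ψ : OblProof.EA B',
      ∑ j ∈ s, g j * OblProof.chi0 B' j.1 ψ.1 = 0 := by
    intro ψ
    have h := congrFun (congrArg (OblProof.GG B') hsum) ψ
    rw [map_sum] at h
    have hm : ∀ j : {S : Finset (X × Fin n) // S ⊆ (B.obl n hn).V i ∧ 2 * S.card < n},
        OblProof.GG B' (((B.obl n hn).single i).monomialOn () j.1 j.2.1) ψ
          = OblProof.chi0 B' j.1 ψ.1 := fun j => OblProof.GG_monomialOn B' j.1 j.2.1 ψ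
    simpa [Finset.sum_apply, Pi.smul_apply, smul_eq_mul,
      hm] using h
  have hmain : ∑ ψ : OblProof.EA B',
      OblProof.chi0 B' j0.1 ψ.1 * (∑ j ∈ s, g j * OblProof.chi0 B' j.1 ψ.1) = 0 := by
    simp [happ]
  have hswap : ∑ ψ : OblProof.EA B',
        OblProof.chi0 B' j0.1 ψ.1 * (∑ j ∈ s, g j * OblProof.chi0 B' j.1 ψ.1)
      = ∑ j ∈ s, g j *
          ∑ ψ : OblProof.EA B', OblProof.chi0 B' (symmDiff j0.1 j.1) ψ.1 := by
    rw [Finset.sum_congr rfl (fun ψ _ => Finset.mul_sum _ _ _), Finset.sum_comm]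
    refine Finset.sum_congr rfl ?_
    intro j _
    rw [Finset.mul_sum]
    refine Finset.sum_congr rfl ?_
    intro ψ _
    rw [← OblProof.chi0_mul B' j0.1 j.1 (symmDiff j0.1 j.1)
      (fun z => Finset.mem_symmDiff) ψ.1]
    ring
  rw [hswap] at hmain
  rw [Finset.sum_eq_single j0] at hmain
  · rw [symmDiff_self] at hmain
    have hone : ∀ ψ : OblProof.EA B', OblProof.chi0 B' (⊥ : Finset (X × Fin n)) ψ.1 = 1 :=
      fun ψ => OblProof.chi0_empty B' ψ.1
    rw [Finset.sum_congr rfl (fun ψ _ => hone ψ), Finset.sum_const,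
      nsmul_eq_mul, mul_one] at hmain
    have hpos : 0 < (Finset.univ : Finset (OblProof.EA B')).card :=
      Finset.card_pos.mpr Finset.univ_nonempty
    have hcne : (((Finset.univ : Finset (OblProof.EA B')).card : ℕ) : ℂ) ≠ 0 :=
      Nat.cast_ne_zero.mpr (Nat.pos_iff_ne_zero.mp hpos)
    exact (mul_eq_zero.mp hmain).resolve_right hcne
  · intro j hj hne
    have hTne : (symmDiff j0.1 j.1).Nonempty := by
      rw [Finset.nonempty_iff_ne_empty]
      intro h
      exact hne (Subtype.ext ((symmDiff_eq_bot.mp h).symm))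
    have hTsub : symmDiff j0.1 j.1 ⊆ B'.V () := by
      refine subset_trans (le_trans symmDiff_le_sup le_rfl) ?_
      exact Finset.union_subset j0.2.1 j.2.1
    have hTcard : (symmDiff j0.1 j.1).card < n := by
      have h1 : (symmDiff j0.1 j.1).card ≤ (j0.1 ∪ j.1).card :=
        Finset.card_le_card symmDiff_le_sup
      have h2 : (j0.1 ∪ j.1).card ≤ j0.1.card + j.1.card := Finset.card_union_le _ _
      have h3 := j0.2.2
      have h4 := j.2.2
      omega
    rw [OblProof.sum_chi0_zero B n hn i _ hTsub hTne hTcard, mul_zero]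
  · intro h
    exact absurd hj0 h
end
end
end

section
/- Let V be a finite set of variables, let C ⊆ {±1}^V be a constraint, and let P = ({(x_q, π_1^{(q)}, π_{−1}^{(q)})}_{q=1}^d, σ) be a width-5 permutation branching program of depth d recognizing C. Call a triple (φ, T, r) with φ ∈ {±1}^V, T : [4]×[d] → S_5, and r : [3]×[d−1] → S_5 a tableau if, with the convention r(p,0) = r(p,d) = e: T(1,q) = π^{(q)}_{φ(x_q)} for all q ∈ [d]; T(p+1,q) = r(p,q−1)^{−1}·T(p,q)·r(p,q) for all p ∈ [3] and q ∈ [d]; and T(4,1)·T(4,2)⋯T(4,d) = σ. Then: (i) if (φ, T, r) is a tableau, then φ ∈ C; (ii) for every φ ∈ C and every r : [3]×[d−1] → S_5 there is a unique T : [4]×[d] → S_5 such that (φ, T, r) is a tableau. -/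
open scoped Classical
noncomputable section

private lemma tele_range {G : Type*} [Group G] (g f : ℕ → G) (n : ℕ) :
    ((List.range n).map (fun q => (g q)⁻¹ * f q * g (q+1))).prod
      = (g 0)⁻¹ * ((List.range n).map f).prod * g n := by
  induction n with
  | zero => simp
  | succ n ih =>
      rw [List.range_succ, List.map_append, List.map_append, List.prod_append,
        List.prod_append, ih]
      simp [mul_assoc]

private lemma prod_finRange_val {G : Type*} [Monoid G] (d : ℕ) (h : ℕ → G) :
    ((List.finRange d).map (fun q : Fin d => h q.1)).prod = ((List.range d).map h).prod := by
  rw [show (fun q : Fin d => h q.1) = h ∘ Fin.val from rfl, ← List.map_map,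
    List.map_coe_finRange_eq_range]

private lemma tele_fin {G : Type*} [Group G] (d : ℕ) (f : Fin d → G) (g : ℕ → G)
    (h0 : g 0 = 1) (hd : g d = 1) :
    ((List.finRange d).map (fun q => (g q.1)⁻¹ * f q * g (q.1+1))).prod
      = ((List.finRange d).map f).prod := by
  set h' : ℕ → G := fun n => if hn : n < d then f ⟨n, hn⟩ else 1 with hh'
  have e1 : ((List.finRange d).map (fun q => (g q.1)⁻¹ * f q * g (q.1+1))).prod
      = ((List.finRange d).map (fun q : Fin d => (g q.1)⁻¹ * h' q.1 * g (q.1+1))).prod := by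
    congr 1
    refine List.map_congr_left fun q _ => ?_
    simp [hh', q.2]
  have e2 : ((List.finRange d).map f).prod
      = ((List.finRange d).map (fun q : Fin d => h' q.1)).prod := by
    congr 1
    refine List.map_congr_left fun q _ => ?_
    simp [hh', q.2]
  rw [e1, e2, prod_finRange_val d (fun n => (g n)⁻¹ * h' n * g (n+1)), prod_finRange_val d h',
    tele_range, h0, hd]
  simp

/-- (Randomizing tableaux, classically.) If a width-5 permutation
branching program `P` recognizes `C`, then (i) the original-variable part of any tableau
satisfies `C`, and (ii) for every satisfying assignment and every choice of randomizers
there is a unique completion to a tableau. -/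
theorem tableau_characterization
    {V : Type} (C : Set (V → ℤˣ)) (P : PBP V) (hP : P.Recognizes C) :
    (∀ (φ : V → ℤˣ) (T : Fin 4 → Fin P.d → Equiv.Perm (Fin 5))
      (r : Fin 3 → Fin (P.d - 1) → Equiv.Perm (Fin 5)),
      IsTableau P φ T r → φ ∈ C) ∧
    (∀ φ ∈ C, ∀ r : Fin 3 → Fin (P.d - 1) → Equiv.Perm (Fin 5),
      ∃! T : Fin 4 → Fin P.d → Equiv.Perm (Fin 5), IsTableau P φ T r) := by
  obtain ⟨hrec1, hrec2⟩ := hP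
  have hrext0 : ∀ (r : Fin 3 → Fin (P.d - 1) → Equiv.Perm (Fin 5)) (p : Fin 3),
      rExt r p 0 = 1 := by intro r p; simp [rExt]
  have hrextd : ∀ (r : Fin 3 → Fin (P.d - 1) → Equiv.Perm (Fin 5)) (p : Fin 3),
      rExt r p P.d = 1 := by
    intro r p; rw [rExt, dif_neg]; omega
  have key : ∀ (φ : V → ℤˣ) (T : Fin 4 → Fin P.d → Equiv.Perm (Fin 5))
      (r : Fin 3 → Fin (P.d - 1) → Equiv.Perm (Fin 5)), IsTableau P φ T r →
      ((List.finRange P.d).map fun q => T 3 q).prod = P.eval φ := by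
    intro φ T r h
    have hstep : ∀ p : Fin 3,
        ((List.finRange P.d).map fun q => T p.succ q).prod
          = ((List.finRange P.d).map fun q => T p.castSucc q).prod := by
      intro p
      have e : (fun q : Fin P.d => T p.succ q)
          = fun q => (rExt r p q.1)⁻¹ * T p.castSucc q * rExt r p (q.1+1) :=
        funext fun q => h.row_succ p q
      rw [e]
      exact tele_fin P.d (fun q => T p.castSucc q) (rExt r p) (hrext0 r p) (hrextd r p)
    have h3 := hstep 2
    have h2 := hstep 1
    have h1 := hstep 0
    rw [show (2 : Fin 3).succ = (3 : Fin 4) from rfl,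
      show (2 : Fin 3).castSucc = (2 : Fin 4) from rfl] at h3
    rw [show (1 : Fin 3).succ = (2 : Fin 4) from rfl,
      show (1 : Fin 3).castSucc = (1 : Fin 4) from rfl] at h2
    rw [show (0 : Fin 3).succ = (1 : Fin 4) from rfl,
      show (0 : Fin 3).castSucc = (0 : Fin 4) from rfl] at h1
    rw [h3, h2, h1]
    have e0 : (fun q : Fin P.d => T 0 q) = fun q => P.perm q (φ (P.var q)) :=
      funext fun q => h.row_one q
    rw [e0]; rfl
  constructor
  · intro φ T r ht
    have hk := key φ T r ht
    rw [ht.row_four_prod] at hk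
    by_contra hφ
    rw [hrec2 φ hφ] at hk
    have hc := P.sigma_card
    rw [hk] at hc
    simp at hc
  · intro φ hφ r
    set T0 : Fin P.d → Equiv.Perm (Fin 5) := fun q => P.perm q (φ (P.var q)) with hT0
    set st : Fin 3 → (Fin P.d → Equiv.Perm (Fin 5)) → Fin P.d → Equiv.Perm (Fin 5) :=
      fun p R q => (rExt r p q.1)⁻¹ * R q * rExt r p (q.1+1) with hst'
    have hst : ∀ (p : Fin 3) (R : Fin P.d → Equiv.Perm (Fin 5)),
        ((List.finRange P.d).map (st p R)).prod = ((List.finRange P.d).map R).prod :=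
      fun p R => tele_fin P.d R (rExt r p) (hrext0 r p) (hrextd r p)
    refine ⟨![T0, st 0 T0, st 1 (st 0 T0), st 2 (st 1 (st 0 T0))], ⟨?_, ?_, ?_⟩, ?_⟩
    · intro q; rfl
    · intro p q
      fin_cases p <;> rfl
    · show ((List.finRange P.d).map (st 2 (st 1 (st 0 T0)))).prod = P.sigma
      rw [hst, hst, hst]
      exact hrec1 φ hφ
    · intro T' hT'
      have h0 : T' 0 = T0 := funext fun q => hT'.row_one q
      have h1 : T' 1 = st 0 T0 := by
        funext q
        rw [show (1 : Fin 4) = (0 : Fin 3).succ from rfl, hT'.row_succ 0 q,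
          show (0 : Fin 3).castSucc = (0 : Fin 4) from rfl, h0]
      have h2 : T' 2 = st 1 (st 0 T0) := by
        funext q
        rw [show (2 : Fin 4) = (1 : Fin 3).succ from rfl, hT'.row_succ 1 q,
          show (1 : Fin 3).castSucc = (1 : Fin 4) from rfl, h1]
      have h3 : T' 3 = st 2 (st 1 (st 0 T0)) := by
        funext q
        rw [show (3 : Fin 4) = (2 : Fin 3).succ from rfl, hT'.row_succ 2 q,
          show (2 : Fin 3).castSucc = (2 : Fin 4) from rfl, h2]
      funext i
      fin_cases i
      · exact h0
      · exact h1
      · exact h2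
      · exact h3
end
end

section
/- Let m ≥ 1, let 1 ≤ n < 120, let ω = exp(2πi/120) ∈ ℂ, and fix a bijection γ : {0,1,…,119} → S_5. Let f : S_5^m → S_5 and suppose that for some k ∈ {1,…,m} and for every fixing of the coordinates other than k, the map S_5 → S_5 given by varying the k-th coordinate of f is surjective. Define g : ({0,…,119})^m → ℂ by g(j_1,…,j_m) = ω^{n·γ^{-1}(f(γ(j_1),…,γ(j_m)))}. Then for every a = (a_1,…,a_m) ∈ ({0,…,119})^m with a_k = 0, the Fourier coefficient ∑_{j ∈ ({0,…,119})^m} g(j)·ω^{−(a_1 j_1 + ⋯ + a_m j_m)} equals 0. (Equivalently, in Lemma 'nolinearterm': if (V,C) is a boolean constraint encoding x = f(y_1,…,y_m) on permutation-valued variables, then writing x^n = ∑_a c_a y_1^{a_1}⋯y_m^{a_m} in 𝒜(V,C), the coefficient c_a vanishes whenever a_k = 0.) -/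
open scoped Classical
noncomputable section

/-- **Statement 18.** Vanishing of Fourier coefficients: if the `k`-th coordinate of
`f : S₅^m → S₅` is surjective for every fixing of the other coordinates, then every
Fourier coefficient of `j ↦ ω^{n·γ⁻¹(f(γ∘j))}` at a frequency vector `a` with `a k = 0`
vanishes, where `ω = e^{2πi/120}` and `1 ≤ n < 120`. -/
theorem fourier_coefficient_vanishes
    (m : ℕ) (hm : 1 ≤ m) (n : ℕ) (hn1 : 1 ≤ n) (hn2 : n < 120)
    (γ : Fin 120 ≃ Equiv.Perm (Fin 5))
    (f : (Fin m → Equiv.Perm (Fin 5)) → Equiv.Perm (Fin 5))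
    (k : Fin m)
    (hf : ∀ ρ : Fin m → Equiv.Perm (Fin 5),
      Function.Surjective fun π : Equiv.Perm (Fin 5) => f (Function.update ρ k π))
    (a : Fin m → Fin 120) (ha : a k = 0) :
    ∑ j : Fin m → Fin 120,
      Complex.exp (2 * Real.pi * Complex.I / 120) ^
          (n * ((γ.symm (f fun i => γ (j i)) : Fin 120) : ℕ)) *
        Complex.exp (2 * Real.pi * Complex.I / 120) ^
          (-(∑ i : Fin m, ((a i : ℕ) : ℤ) * ((j i : ℕ) : ℤ))) = 0 := by

  set ω : ℂ := Complex.exp (2 * Real.pi * Complex.I / 120) with hωdef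
  have hω120 : ω ^ (120 : ℕ) = 1 := by
    rw [hωdef, ← Complex.exp_nat_mul,
      show ((120 : ℕ) : ℂ) * (2 * Real.pi * Complex.I / 120) = 2 * Real.pi * Complex.I by
        push_cast; ring,
      Complex.exp_two_pi_mul_I]
  have hωn : ω ^ n ≠ 1 := by
    intro hcon
    rw [hωdef, ← Complex.exp_nat_mul, Complex.exp_eq_one_iff] at hcon
    obtain ⟨z, hz⟩ := hcon
    have h2 : (2 : ℂ) * Real.pi * Complex.I ≠ 0 := by
      simp [Real.pi_ne_zero, Complex.I_ne_zero]
    have h3 : ((n : ℂ) / 120) * (2 * Real.pi * Complex.I)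
        = (z : ℂ) * (2 * Real.pi * Complex.I) := by rw [← hz]; ring
    have h4 : (n : ℂ) / 120 = (z : ℂ) := mul_right_cancel₀ h2 h3
    have h5 : (n : ℂ) = (z : ℂ) * 120 := by
      rw [div_eq_iff (by norm_num : (120:ℂ) ≠ 0)] at h4; exact h4
    have h6 : (n : ℤ) = z * 120 := by exact_mod_cast h5
    omega
  have hsum : ∑ t : Fin 120, ω ^ (n * (t : ℕ)) = 0 := by
    calc ∑ t : Fin 120, ω ^ (n * (t : ℕ))
        = ∑ t ∈ Finset.range 120, (ω ^ n) ^ t := by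
          rw [show (∑ t : Fin 120, ω ^ (n * (t : ℕ)))
              = ∑ t : Fin 120, (ω ^ n) ^ (t : ℕ) from
            Finset.sum_congr rfl fun t _ => pow_mul ω n t]
          exact Fin.sum_univ_eq_sum_range (fun t => (ω ^ n) ^ t) 120
      _ = ((ω ^ n) ^ 120 - 1) / (ω ^ n - 1) := geom_sum_eq hωn 120
      _ = 0 := by
          rw [← pow_mul, mul_comm, pow_mul, hω120, one_pow]; simp
  classical
  let e := Equiv.funSplitAt k (Fin 120)
  rw [← e.symm.sum_comp, Fintype.sum_prod_type, Finset.sum_comm]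
  refine Finset.sum_eq_zero fun rest _ => ?_
  set ρ : Fin m → Equiv.Perm (Fin 5) :=
    fun i => γ (e.symm ((0 : Fin 120), rest) i) with hρ
  have hupd : ∀ c : Fin 120,
      (fun i => γ (e.symm (c, rest) i)) = Function.update ρ k (γ c) := by
    intro c
    funext i
    by_cases h : i = k
    · subst h; simp [e, Function.update_self, Equiv.funSplitAt]
    · simp [hρ, e, Function.update_of_ne h, Equiv.funSplitAt, h]
  have hexp : ∀ c : Fin 120,
      (∑ i : Fin m, ((a i : ℕ) : ℤ) * (((e.symm (c, rest)) i : ℕ) : ℤ))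
        = ∑ i : Fin m, ((a i : ℕ) : ℤ) * (((e.symm ((0:Fin 120), rest)) i : ℕ) : ℤ) := by
    intro c
    refine Finset.sum_congr rfl fun i _ => ?_
    by_cases h : i = k
    · subst h; simp [ha]
    · simp [e, Equiv.funSplitAt, h]
  have hbij : Function.Bijective
      (fun c : Fin 120 => γ.symm (f (Function.update ρ k (γ c)))) := by
    apply Function.Surjective.bijective_of_finite
    intro t
    obtain ⟨π, hπ⟩ := hf ρ (γ t)
    exact ⟨γ.symm π, by simpa using congrArg γ.symm hπ⟩
  calc ∑ c : Fin 120,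
        ω ^ (n * ((γ.symm (f fun i => γ (e.symm (c, rest) i)) : Fin 120) : ℕ)) *
          ω ^ (-(∑ i : Fin m, ((a i : ℕ) : ℤ) * (((e.symm (c, rest)) i : ℕ) : ℤ)))
      = (∑ c : Fin 120,
          ω ^ (n * ((γ.symm (f (Function.update ρ k (γ c))) : Fin 120) : ℕ))) *
          ω ^ (-(∑ i : Fin m, ((a i : ℕ) : ℤ) * (((e.symm ((0:Fin 120), rest)) i : ℕ) : ℤ))) := by
        rw [Finset.sum_mul]
        exact Finset.sum_congr rfl fun c _ => by rw [hupd c, hexp c]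
    _ = 0 := by
        rw [hbij.sum_comp (fun t : Fin 120 => ω ^ (n * (t : ℕ))), hsum, zero_mul]
end
end
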